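/- Let A be a set of non-negative integers with {0,1} ⊆ A, and let z be a positive integer. Then for every positive integer k, ρ_z(k ⊗ A) ≥ 1 − (1 − ρ_z(A))^k. -/

import Mathlib

open Pointwise

/-- Greedy sumset: sums a + b where b fits strictly below the gap to the next element of A. -/
def greedySum (A B : Set ℤ) : Set ℤ :=
  {z | ∃ a ∈ A, ∃ b ∈ B, 0 ≤ b ∧ z = a + b ∧ ∀ a' ∈ A, a' ≤ a + b → a' ≤ a}

/-- Density of a set of integers over the interval [1, z]. -/
noncomputable def dens (z : ℕ) (S : Set ℤ) : ℝ :=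
  sInf {r : ℝ | ∃ z' : ℕ, 1 ≤ z' ∧ z' ≤ z ∧ r = (S ∩ Set.Icc 1 (z' : ℤ)).ncard / z'}

/-- k-fold greedy sumset. -/
def kGreedy : ℕ → Set ℤ → Set ℤ
  | 0, _ => {0}
  | k + 1, A => greedySum A (kGreedy k A)

/-- k-fold sumset. -/
def kFold : ℕ → Set ℤ → Set ℤ
  | 0, _ => {0}
  | k + 1, A => A + kFold k A

lemma dens_le (z : ℕ) (S : Set ℤ) {w : ℕ} (h1 : 1 ≤ w) (h2 : w ≤ z) :
    dens z S ≤ ((S ∩ Set.Icc 1 (w : ℤ)).ncard : ℝ) / w :=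
  csInf_le ⟨0, by rintro r ⟨v, hv1, hv2, rfl⟩; positivity⟩ ⟨w, h1, h2, rfl⟩

lemma dens_nonneg (z : ℕ) (hz : 1 ≤ z) (S : Set ℤ) : 0 ≤ dens z S :=
  le_csInf ⟨_, z, hz, le_rfl, rfl⟩ (by rintro r ⟨v, hv1, hv2, rfl⟩; positivity)

lemma ncard_Icc_int (a b : ℤ) : (Set.Icc a b).ncard = (b + 1 - a).toNat := by
  rw [← Finset.coe_Icc, Set.ncard_coe_finset, Int.card_Icc]

lemma dens_le_one (z : ℕ) (hz : 1 ≤ z) (S : Set ℤ) : dens z S ≤ 1 := by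
  refine (dens_le z S hz le_rfl).trans ?_
  rw [div_le_one (by exact_mod_cast Nat.pos_of_ne_zero (by omega))]
  have h : (S ∩ Set.Icc 1 (z : ℤ)).ncard ≤ (Set.Icc (1 : ℤ) z).ncard :=
    Set.ncard_le_ncard Set.inter_subset_right (Set.finite_Icc _ _)
  have h2 : (Set.Icc (1 : ℤ) (z : ℤ)).ncard = z := by
    rw [ncard_Icc_int]; omega
  rw [h2] at h
  exact_mod_cast h

lemma count_key (A B : Set ℤ) (hnn : ∀ a ∈ A, 0 ≤ a) (h1 : (1 : ℤ) ∈ A)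
    (h0B : (0 : ℤ) ∈ B) (z : ℕ) (hz : 1 ≤ z) :
    ∀ n : ℕ, n ≤ z →
      ((A ∩ Set.Icc 1 (n : ℤ)).ncard : ℝ)
          + dens z B * ((n : ℝ) - (A ∩ Set.Icc 1 (n : ℤ)).ncard)
        ≤ ((greedySum A B ∩ Set.Icc 1 (n : ℤ)).ncard : ℝ) := by
  intro n
  induction n using Nat.strong_induction_on with
  | _ n ih =>
    intro hn
    rcases Nat.eq_zero_or_pos n with rfl | hn1
    · simp [Set.Icc_eq_empty (by norm_num : ¬(1 : ℤ) ≤ 0)]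
    set β := dens z B with hβ
    have hTfin : (A ∩ Set.Icc (0 : ℤ) n).Finite :=
      (Set.finite_Icc _ _).subset Set.inter_subset_right
    have h1T : (1 : ℤ) ∈ A ∩ Set.Icc (0 : ℤ) n := ⟨h1, by constructor <;> omega⟩
    obtain ⟨a, haT, hamax⟩ := Set.Finite.exists_maximalFor id _ hTfin ⟨1, h1T⟩
    have hle : ∀ x ∈ A, x ≤ (n : ℤ) → x ≤ a := by
      intro x hx hxn
      by_contra h
      push_neg at h
      have := hamax (j := x) ⟨hx, hnn x hx, hxn⟩ (le_of_lt h)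
      simp only [id] at this
      omega
    have haA : a ∈ A := haT.1
    have ha1 : 1 ≤ a := hle 1 h1 (by exact_mod_cast hn1)
    have han : a ≤ (n : ℤ) := haT.2.2
    set S := greedySum A B with hS
    set U1 := S ∩ Set.Icc 1 (a - 1) with hU1
    set U2 := (fun b => a + b) '' (B ∩ Set.Icc 1 ((n : ℤ) - a)) with hU2
    have hU2S : U2 ⊆ S ∩ Set.Icc (a + 1) (n : ℤ) := by
      rintro x ⟨b, ⟨hbB, hb1, hbn⟩, hxb⟩
      obtain rfl : x = a + b := hxb.symm
      refine ⟨⟨a, haA, b, hbB, by omega, rfl, ?_⟩, by omega, by omega⟩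
      intro a' ha' hle'
      exact hle a' ha' (by omega)
    have haS : a ∈ S ∩ Set.Icc 1 (n : ℤ) :=
      ⟨⟨a, haA, 0, h0B, le_rfl, (add_zero a).symm, fun a' _ h => by simpa using h⟩, ha1, han⟩
    have hsub : U1 ∪ ({a} ∪ U2) ⊆ S ∩ Set.Icc 1 (n : ℤ) := by
      rintro x (⟨hxS, hx1, hx2⟩ | (rfl | hx))
      · exact ⟨hxS, hx1, by omega⟩
      · exact haS
      · obtain ⟨hxS, hx1, hx2⟩ := hU2S hx
        exact ⟨hxS, by omega, hx2⟩
    have hU1fin : U1.Finite := (Set.finite_Icc _ _).subset Set.inter_subset_right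
    have hU2fin : U2.Finite :=
      ((Set.finite_Icc _ _).subset Set.inter_subset_right).image _
    have hd2 : Disjoint ({a} : Set ℤ) U2 := by
      rw [Set.disjoint_left]
      rintro x rfl hx
      obtain ⟨_, hx1, _⟩ := hU2S hx
      omega
    have hd1 : Disjoint U1 ({a} ∪ U2) := by
      rw [Set.disjoint_left]
      rintro x ⟨_, _, hx2⟩ (rfl | hx)
      · omega
      · obtain ⟨_, hx1, _⟩ := hU2S hx
        omega
    have hcard : (U1 ∪ ({a} ∪ U2)).ncard = U1.ncard + (1 + U2.ncard) := by
      rw [Set.ncard_union_eq hd1 hU1fin ((Set.finite_singleton a).union hU2fin),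
        Set.ncard_union_eq hd2 (Set.finite_singleton a) hU2fin, Set.ncard_singleton]
    have hU2card : U2.ncard = (B ∩ Set.Icc 1 ((n : ℤ) - a)).ncard :=
      Set.ncard_image_of_injective _ (add_right_injective a)
    have hScard : U1.ncard + (1 + U2.ncard) ≤ (S ∩ Set.Icc 1 (n : ℤ)).ncard := by
      rw [← hcard]
      exact Set.ncard_le_ncard hsub ((Set.finite_Icc _ _).subset Set.inter_subset_right)
    have hAsplit : A ∩ Set.Icc 1 (n : ℤ) = insert a (A ∩ Set.Icc 1 (a - 1)) := by
      ext x
      constructor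
      · rintro ⟨hxA, hx1, hxn⟩
        rcases eq_or_ne x a with rfl | hne
        · exact Set.mem_insert _ _
        · exact Set.mem_insert_of_mem _ ⟨hxA, hx1, by have := hle x hxA hxn; omega⟩
      · rintro (rfl | ⟨hxA, hx1, hx2⟩)
        · exact ⟨haA, ha1, han⟩
        · exact ⟨hxA, hx1, by omega⟩
    have hAcard : (A ∩ Set.Icc 1 (n : ℤ)).ncard = (A ∩ Set.Icc 1 (a - 1)).ncard + 1 := by
      rw [hAsplit, Set.ncard_insert_of_notMem (by rintro ⟨_, _, h⟩; omega)
        ((Set.finite_Icc _ _).subset Set.inter_subset_right)]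
    -- apply IH at j = a - 1
    set j := (a - 1).toNat with hjdef
    have hj : (j : ℤ) = a - 1 := Int.toNat_of_nonneg (by omega)
    have hjn : j < n := by omega
    have hIH := ih j hjn (by omega)
    rw [hj, ← hU1] at hIH
    have hjr : (j : ℝ) = (a : ℝ) - 1 := by
      exact_mod_cast congrArg (Int.cast : ℤ → ℝ) hj
    rw [hjr] at hIH
    -- B bound
    have hBbound : β * ((n : ℝ) - (a : ℝ)) ≤ ((B ∩ Set.Icc 1 ((n : ℤ) - a)).ncard : ℝ) := by
      rcases eq_or_lt_of_le han with heq | hlt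
      · have h0 : ((n : ℝ) - (a : ℝ)) = 0 := by
          have : ((a : ℝ)) = (n : ℝ) := by exact_mod_cast heq
          linarith
        rw [h0, mul_zero]
        positivity
      · set w := ((n : ℤ) - a).toNat with hwdef
        have hw : (w : ℤ) = (n : ℤ) - a := Int.toNat_of_nonneg (by omega)
        have hw1 : 1 ≤ w := by omega
        have hwz : w ≤ z := by omega
        have hd := dens_le z B hw1 hwz
        rw [← hβ] at hd
        have hwpos : (0 : ℝ) < (w : ℝ) := by exact_mod_cast hw1
        rw [le_div_iff₀ hwpos] at hd
        have hwr : ((w : ℕ) : ℝ) = (n : ℝ) - (a : ℝ) := by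
          exact_mod_cast congrArg (Int.cast : ℤ → ℝ) hw
        rw [hwr, hw] at hd
        exact hd
    have hAcard' : ((A ∩ Set.Icc 1 (n : ℤ)).ncard : ℝ)
        = ((A ∩ Set.Icc 1 (a - 1)).ncard : ℝ) + 1 := by exact_mod_cast hAcard
    have hScard' : (U1.ncard : ℝ) + (1 + (U2.ncard : ℝ))
        ≤ ((S ∩ Set.Icc 1 (n : ℤ)).ncard : ℝ) := by exact_mod_cast hScard
    have hU2card' : (U2.ncard : ℝ) = ((B ∩ Set.Icc 1 ((n : ℤ) - a)).ncard : ℝ) := by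
      exact_mod_cast hU2card
    have key : β * ((a : ℝ) - 1 - ((A ∩ Set.Icc 1 (a - 1)).ncard : ℝ))
          + β * ((n : ℝ) - (a : ℝ))
        = β * ((n : ℝ) - (((A ∩ Set.Icc 1 (a - 1)).ncard : ℝ) + 1)) := by ring
    rw [hAcard']
    linarith [hIH, hBbound, hScard', hU2card', key]

lemma dens_greedySum (A B : Set ℤ) (hnn : ∀ a ∈ A, 0 ≤ a) (h1 : (1 : ℤ) ∈ A)
    (h0B : (0 : ℤ) ∈ B) (z : ℕ) (hz : 1 ≤ z) :
    dens z (greedySum A B) ≥ 1 - (1 - dens z A) * (1 - dens z B) := by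
  refine le_csInf ⟨_, z, hz, le_rfl, rfl⟩ ?_
  rintro r ⟨w, hw1, hw2, rfl⟩
  have hc := count_key A B hnn h1 h0B z hz w hw2
  have hwpos : (0 : ℝ) < (w : ℝ) := by exact_mod_cast hw1
  rw [le_div_iff₀ hwpos]
  have hdA := dens_le z A hw1 hw2
  rw [le_div_iff₀ hwpos] at hdA
  have hB1 : dens z B ≤ 1 := dens_le_one z hz B
  nlinarith [mul_le_mul_of_nonneg_right hdA (by linarith : (0 : ℝ) ≤ 1 - dens z B)]

lemma zero_mem_kGreedy (A : Set ℤ) (h0 : (0 : ℤ) ∈ A) : ∀ k, (0 : ℤ) ∈ kGreedy k A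
  | 0 => rfl
  | (k + 1) => ⟨0, h0, 0, zero_mem_kGreedy A h0 k, le_rfl, (add_zero 0).symm,
      fun a' _ h => by simpa using h⟩

lemma kGreedy_one (A : Set ℤ) : kGreedy 1 A = A := by
  ext x
  show x ∈ greedySum A {0} ↔ x ∈ A
  constructor
  · rintro ⟨a, ha, b, hb, hb0, rfl, _⟩
    obtain rfl : b = 0 := hb
    simpa using ha
  · intro hx
    exact ⟨x, hx, 0, rfl, le_rfl, (add_zero x).symm, fun a' _ h => by simpa using h⟩

theorem stmt2 (A : Set ℤ) (hnn : ∀ a ∈ A, 0 ≤ a) (h0 : (0 : ℤ) ∈ A) (h1 : (1 : ℤ) ∈ A)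
    (z : ℕ) (hz : 1 ≤ z) (k : ℕ) (hk : 1 ≤ k) :
    dens z (kGreedy k A) ≥ 1 - (1 - dens z A) ^ k := by
  induction k, hk using Nat.le_induction with
  | base =>
    rw [kGreedy_one, pow_one]
    linarith
  | succ k hk ih =>
    have hstep := dens_greedySum A (kGreedy k A) hnn h1 (zero_mem_kGreedy A h0 k) z hz
    have hd1 : dens z A ≤ 1 := dens_le_one z hz A
    have h2 : 1 - dens z (kGreedy k A) ≤ (1 - dens z A) ^ k := by linarith
    calc dens z (kGreedy (k + 1) A) = dens z (greedySum A (kGreedy k A)) := rfl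
      _ ≥ 1 - (1 - dens z A) * (1 - dens z (kGreedy k A)) := hstep
      _ ≥ 1 - (1 - dens z A) * (1 - dens z A) ^ k := by
          nlinarith [mul_le_mul_of_nonneg_left h2 (by linarith : (0 : ℝ) ≤ 1 - dens z A)]
      _ = 1 - (1 - dens z A) ^ (k + 1) := by ring
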